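/- Let Q_K be the modified 2^K-ary QAM constellation. Then: (1) for K = 3, the maximum of |z|² over z ∈ Q_3 equals 10, and every z ∈ Q_3 with |z|² = 10 has exactly one point w ∈ Q_3 with |z − w| = 2, and that point satisfies |w|² = 2; (2) for even K ≥ 2, the maximum of |z|² over z ∈ Q_K equals 2(2^{K/2}−1)², and every z ∈ Q_K of maximal squared modulus has exactly two points w ∈ Q_K with |z − w| = 2, each satisfying |w|² = (2^{K/2}−1)² + (2^{K/2}−3)²; (3) for odd K ≥ 5, the maximum of |z|² over z ∈ Q_K equals (2^{(K−1)/2}−1)² + (3·2^{(K−3)/2}−1)², and every z ∈ Q_K of maximal squared modulus has exactly two points w ∈ Q_K with |z − w| = 2, whose squared moduli are (2^{(K−1)/2}−3)² + (3·2^{(K−3)/2}−1)² and (2^{(K−1)/2}−1)² + (3·2^{(K−3)/2}−3)². -/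

import Mathlib

/-- The modified `2^K`-ary QAM constellation. -/
noncomputable def modQAM (K : ℕ) : Set ℂ :=
  if K = 3 then
    ({1 + 3 * Complex.I, 1 + Complex.I, 3 - Complex.I, 1 - Complex.I,
      -1 - 3 * Complex.I, -1 - Complex.I, -3 + Complex.I, -1 + Complex.I} : Set ℂ)
  else if K % 2 = 0 then
    {z | ∃ m n : ℤ, -(2 : ℤ) ^ ((K - 2) / 2) + 1 ≤ m ∧ m ≤ (2 : ℤ) ^ ((K - 2) / 2) ∧
      -(2 : ℤ) ^ ((K - 2) / 2) + 1 ≤ n ∧ n ≤ (2 : ℤ) ^ ((K - 2) / 2) ∧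
      z = (2 * (m : ℂ) - 1) + (2 * (n : ℂ) - 1) * Complex.I}
  else
    {z | ∃ m n : ℤ, -(3 * (2 : ℤ) ^ ((K - 5) / 2)) + 1 ≤ m ∧ m ≤ 3 * (2 : ℤ) ^ ((K - 5) / 2) ∧
      -(2 : ℤ) ^ ((K - 3) / 2) + 1 ≤ n ∧ n ≤ (2 : ℤ) ^ ((K - 3) / 2) ∧
      z = (2 * (m : ℂ) - 1) + (2 * (n : ℂ) - 1) * Complex.I} ∪
    {z | ∃ m n : ℤ, -(2 : ℤ) ^ ((K - 3) / 2) + 1 ≤ m ∧ m ≤ (2 : ℤ) ^ ((K - 3) / 2) ∧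
      -(3 * (2 : ℤ) ^ ((K - 5) / 2)) + 1 ≤ n ∧ n ≤ 3 * (2 : ℤ) ^ ((K - 5) / 2) ∧
      z = (2 * (m : ℂ) - 1) + (2 * (n : ℂ) - 1) * Complex.I}


/-! Every point of `Q_K` is `(2m - 1) + (2n - 1)i` for an index `(m, n)` in a rectangle
`[1 - A, A] × [1 - B, B]` of `ℤ²` (for odd `K ≥ 5`, in the union of such a rectangle and its
transpose). Its squared modulus `(2m - 1)² + (2n - 1)²` is largest exactly at the corners of the
rectangle, and two points are at distance `2` exactly when their indices are lattice neighbours.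
A corner has exactly two neighbours in its rectangle, one step inward along each axis, and the
transposed rectangle contributes none. `Q_3` is a finite check. -/

open Set

def qamPoint (p : ℤ × ℤ) : ℂ := (2 * (p.1 : ℂ) - 1) + (2 * (p.2 : ℂ) - 1) * Complex.I

def qamEnergy (p : ℤ × ℤ) : ℤ := (2 * p.1 - 1) ^ 2 + (2 * p.2 - 1) ^ 2

def GridAdj (p q : ℤ × ℤ) : Prop := |p.1 - q.1| + |p.2 - q.2| = 1

instance : DecidableRel GridAdj := fun _ _ => inferInstanceAs (Decidable (_ = _))

def qamRect (A B : ℤ) : Set (ℤ × ℤ) := Icc (1 - A) A ×ˢ Icc (1 - B) B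

theorem qamPoint_re (p : ℤ × ℤ) : (qamPoint p).re = 2 * p.1 - 1 := by simp [qamPoint]

theorem qamPoint_im (p : ℤ × ℤ) : (qamPoint p).im = 2 * p.2 - 1 := by simp [qamPoint]

theorem norm_qamPoint_sq (p : ℤ × ℤ) : ‖qamPoint p‖ ^ 2 = qamEnergy p := by
  rw [Complex.sq_norm, Complex.normSq_apply, qamPoint_re, qamPoint_im, qamEnergy]
  push_cast
  ring

theorem qamPoint_injective : Function.Injective qamPoint := by
  intro p q h
  have hre := congrArg Complex.re h
  have him := congrArg Complex.im h
  rw [qamPoint_re, qamPoint_re] at hre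
  rw [qamPoint_im, qamPoint_im] at him
  exact Prod.ext (by exact_mod_cast (by linarith : (p.1 : ℝ) = q.1))
    (by exact_mod_cast (by linarith : (p.2 : ℝ) = q.2))

theorem Int.sq_add_sq_eq_one_iff (a b : ℤ) : a ^ 2 + b ^ 2 = 1 ↔ |a| + |b| = 1 := by
  rw [← sq_abs a, ← sq_abs b]
  have ha := abs_nonneg a
  have hb := abs_nonneg b
  constructor
  · intro h
    have : |a| ≤ 1 := by nlinarith
    have : |b| ≤ 1 := by nlinarith
    interval_cases |a| <;> interval_cases |b| <;> omega
  · intro h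
    obtain ⟨h₁, h₂⟩ | ⟨h₁, h₂⟩ : |a| = 0 ∧ |b| = 1 ∨ |a| = 1 ∧ |b| = 0 := by omega
    all_goals rw [h₁, h₂]; norm_num

theorem norm_qamPoint_sub_eq_two_iff (p q : ℤ × ℤ) :
    ‖qamPoint p - qamPoint q‖ = 2 ↔ GridAdj p q := by
  have hsq : ‖qamPoint p - qamPoint q‖ ^ 2 =
      4 * (((p.1 - q.1) ^ 2 + (p.2 - q.2) ^ 2 : ℤ) : ℝ) := by
    rw [Complex.sq_norm, Complex.normSq_apply, Complex.sub_re, Complex.sub_im, qamPoint_re,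
      qamPoint_re, qamPoint_im, qamPoint_im]
    push_cast
    ring
  rw [GridAdj, ← Int.sq_add_sq_eq_one_iff, ← sq_eq_sq₀ (norm_nonneg _) zero_le_two, hsq]
  constructor <;> intro h
  · exact_mod_cast (by linarith : (((p.1 - q.1) ^ 2 + (p.2 - q.2) ^ 2 : ℤ) : ℝ) = 1)
  · rw [h]
    norm_num

theorem sq_two_mul_sub_one_le {A m : ℤ} (h₁ : 1 - A ≤ m) (h₂ : m ≤ A) :
    (2 * m - 1) ^ 2 ≤ (2 * A - 1) ^ 2 := by
  nlinarith

theorem sq_two_mul_sub_one_eq_iff {A m : ℤ} :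
    (2 * m - 1) ^ 2 = (2 * A - 1) ^ 2 ↔ m = A ∨ m = 1 - A := by
  rw [sq_eq_sq_iff_eq_or_eq_neg]
  omega

theorem exists_unique_neighbour_of_endpoint {A m : ℤ} (hA : 1 ≤ A) (hm : m = A ∨ m = 1 - A) :
    ∃ m' ∈ Icc (1 - A) A, |m - m'| = 1 ∧ (2 * m' - 1) ^ 2 = (2 * A - 3) ^ 2 ∧
      ∀ k ∈ Icc (1 - A) A, |m - k| = 1 → k = m' := by
  rcases hm with rfl | rfl
  · refine ⟨m - 1, ⟨by omega, by omega⟩, by simp, by ring, ?_⟩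
    rintro k ⟨-, hk⟩ h
    rw [abs_eq_max_neg] at h
    omega
  · refine ⟨2 - A, ⟨by omega, by omega⟩, by norm_num [abs_eq_max_neg], by ring, ?_⟩
    rintro k ⟨hk, -⟩ h
    rw [abs_eq_max_neg] at h
    omega

def HasTwoNeighbours (S : Set (ℤ × ℤ)) (p : ℤ × ℤ) (e₁ e₂ : ℤ) : Prop :=
  ∃ q₁ ∈ S, ∃ q₂ ∈ S, q₁ ≠ q₂ ∧ GridAdj p q₁ ∧ GridAdj p q₂ ∧
    qamEnergy q₁ = e₁ ∧ qamEnergy q₂ = e₂ ∧ ∀ q ∈ S, GridAdj p q → q = q₁ ∨ q = q₂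

def HasCornerEnergies (S : Set (ℤ × ℤ)) (E e₁ e₂ : ℤ) : Prop :=
  (∀ p ∈ S, qamEnergy p ≤ E) ∧ (∃ p ∈ S, qamEnergy p = E) ∧
    ∀ p ∈ S, qamEnergy p = E → HasTwoNeighbours S p e₁ e₂

theorem qamEnergy_swap (p : ℤ × ℤ) : qamEnergy p.swap = qamEnergy p := add_comm _ _

theorem gridAdj_swap {p q : ℤ × ℤ} : GridAdj p.swap q.swap ↔ GridAdj p q := by
  simp only [GridAdj, Prod.fst_swap, Prod.snd_swap, add_comm]

theorem HasTwoNeighbours.swap {S : Set (ℤ × ℤ)} {p : ℤ × ℤ} {e₁ e₂ : ℤ}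
    (h : HasTwoNeighbours S p e₁ e₂) : HasTwoNeighbours (Prod.swap ⁻¹' S) p.swap e₁ e₂ := by
  obtain ⟨q₁, hq₁, q₂, hq₂, hne, h₁, h₂, he₁, he₂, huniq⟩ := h
  refine ⟨q₁.swap, by simpa, q₂.swap, by simpa, by simpa, gridAdj_swap.2 h₁, gridAdj_swap.2 h₂,
    by rwa [qamEnergy_swap], by rwa [qamEnergy_swap], fun q hq hpq => ?_⟩
  rw [← Prod.swap_swap q, Prod.swap_inj, Prod.swap_inj]
  exact huniq q.swap hq (by rwa [← gridAdj_swap, Prod.swap_swap])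

theorem HasTwoNeighbours.union {S T : Set (ℤ × ℤ)} {p : ℤ × ℤ} {e₁ e₂ : ℤ}
    (h : HasTwoNeighbours S p e₁ e₂) (hT : ∀ q ∈ T, GridAdj p q → q ∈ S) :
    HasTwoNeighbours (S ∪ T) p e₁ e₂ := by
  obtain ⟨q₁, hq₁, q₂, hq₂, hne, h₁, h₂, he₁, he₂, huniq⟩ := h
  refine ⟨q₁, .inl hq₁, q₂, .inl hq₂, hne, h₁, h₂, he₁, he₂, ?_⟩
  rintro q (hq | hq) hpq
  exacts [huniq q hq hpq, huniq q (hT q hq hpq) hpq]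

section Rect

variable {A B : ℤ}

theorem qamEnergy_le_of_mem_qamRect {p : ℤ × ℤ} (hp : p ∈ qamRect A B) :
    qamEnergy p ≤ (2 * A - 1) ^ 2 + (2 * B - 1) ^ 2 := by
  obtain ⟨⟨h₁, h₂⟩, h₃, h₄⟩ := hp
  exact add_le_add (sq_two_mul_sub_one_le h₁ h₂) (sq_two_mul_sub_one_le h₃ h₄)

theorem corner_of_qamEnergy_eq {p : ℤ × ℤ} (hp : p ∈ qamRect A B)
    (hE : qamEnergy p = (2 * A - 1) ^ 2 + (2 * B - 1) ^ 2) :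
    (p.1 = A ∨ p.1 = 1 - A) ∧ (p.2 = B ∨ p.2 = 1 - B) := by
  obtain ⟨⟨h₁, h₂⟩, h₃, h₄⟩ := hp
  have := sq_two_mul_sub_one_le h₁ h₂
  have := sq_two_mul_sub_one_le h₃ h₄
  unfold qamEnergy at hE
  exact ⟨sq_two_mul_sub_one_eq_iff.1 (by linarith), sq_two_mul_sub_one_eq_iff.1 (by linarith)⟩

theorem qamRect_hasTwoNeighbours (hA : 1 ≤ A) (hB : 1 ≤ B) {p : ℤ × ℤ} (hp : p ∈ qamRect A B)
    (hE : qamEnergy p = (2 * A - 1) ^ 2 + (2 * B - 1) ^ 2) :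
    HasTwoNeighbours (qamRect A B) p ((2 * A - 3) ^ 2 + (2 * B - 1) ^ 2)
      ((2 * A - 1) ^ 2 + (2 * B - 3) ^ 2) := by
  obtain ⟨m, n⟩ := p
  obtain ⟨hm, hn⟩ := corner_of_qamEnergy_eq hp hE
  obtain ⟨hmI, hnI⟩ := hp
  obtain ⟨m', hm', hmm', hem', huniqm⟩ := exists_unique_neighbour_of_endpoint hA hm
  obtain ⟨n', hn', hnn', hen', huniqn⟩ := exists_unique_neighbour_of_endpoint hB hn
  refine ⟨(m', n), ⟨hm', hnI⟩, (m, n'), ⟨hmI, hn'⟩, ?_, ?_, ?_, ?_, ?_, ?_⟩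
  · rw [abs_eq_max_neg] at hmm'
    simp only [ne_eq, Prod.mk.injEq, not_and]
    omega
  · simpa [GridAdj] using hmm'
  · simpa [GridAdj] using hnn'
  · simp only [qamEnergy, hem', sq_two_mul_sub_one_eq_iff.2 hn]
  · simp only [qamEnergy, hen', sq_two_mul_sub_one_eq_iff.2 hm]
  · rintro ⟨k, l⟩ ⟨hk, hl⟩ hadj
    obtain ⟨rfl, h⟩ | ⟨rfl, h⟩ : l = n ∧ |m - k| = 1 ∨ k = m ∧ |n - l| = 1 := by
      simp only [GridAdj, abs_eq_max_neg] at hadj ⊢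
      omega
    · exact .inl (by rw [huniqm k hk h])
    · exact .inr (by rw [huniqn l hl h])

theorem qamRect_hasCornerEnergies (hA : 1 ≤ A) (hB : 1 ≤ B) :
    HasCornerEnergies (qamRect A B) ((2 * A - 1) ^ 2 + (2 * B - 1) ^ 2)
      ((2 * A - 3) ^ 2 + (2 * B - 1) ^ 2) ((2 * A - 1) ^ 2 + (2 * B - 3) ^ 2) :=
  ⟨fun _ => qamEnergy_le_of_mem_qamRect, ⟨(A, B), ⟨⟨by omega, le_rfl⟩, by omega, le_rfl⟩, rfl⟩,
    fun _ => qamRect_hasTwoNeighbours hA hB⟩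

theorem preimage_swap_qamRect (A B : ℤ) : Prod.swap ⁻¹' qamRect A B = qamRect B A :=
  preimage_swap_prod _ _

theorem mem_qamRect_of_gridAdj_corner {p q : ℤ × ℤ} (hm : p.1 = A ∨ p.1 = 1 - A)
    (hn : p.2 = B ∨ p.2 = 1 - B) (hq : q ∈ qamRect B A) (hpq : GridAdj p q) :
    q ∈ qamRect A B := by
  obtain ⟨⟨h₁, h₂⟩, h₃, h₄⟩ := hq
  simp only [GridAdj, abs_eq_max_neg] at hpq
  exact ⟨⟨by omega, by omega⟩, by omega, by omega⟩

theorem qamRect_union_hasCornerEnergies (hA : 1 ≤ A) (hB : 1 ≤ B) :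
    HasCornerEnergies (qamRect A B ∪ qamRect B A) ((2 * A - 1) ^ 2 + (2 * B - 1) ^ 2)
      ((2 * A - 3) ^ 2 + (2 * B - 1) ^ 2) ((2 * A - 1) ^ 2 + (2 * B - 3) ^ 2) := by
  have hcorner : ∀ p ∈ qamRect A B, qamEnergy p = (2 * A - 1) ^ 2 + (2 * B - 1) ^ 2 →
      HasTwoNeighbours (qamRect A B ∪ qamRect B A) p
        ((2 * A - 3) ^ 2 + (2 * B - 1) ^ 2) ((2 * A - 1) ^ 2 + (2 * B - 3) ^ 2) := by
    intro p hp hE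
    obtain ⟨hm, hn⟩ := corner_of_qamEnergy_eq hp hE
    exact (qamRect_hasTwoNeighbours hA hB hp hE).union fun q hq hpq =>
      mem_qamRect_of_gridAdj_corner hm hn hq hpq
  refine ⟨?_, ⟨(A, B), .inl ⟨⟨by omega, le_rfl⟩, by omega, le_rfl⟩, rfl⟩, ?_⟩
  · rintro p (hp | hp)
    exacts [qamEnergy_le_of_mem_qamRect hp,
      (qamEnergy_le_of_mem_qamRect hp).trans_eq (add_comm _ _)]
  · rintro p (hp | hp) hE
    · exact hcorner p hp hE
    · -- a corner of the transposed rectangle is the transpose of a corner of `qamRect A B`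
      rw [← preimage_swap_qamRect] at hp
      have := (hcorner p.swap hp (by rwa [qamEnergy_swap])).swap
      rwa [Prod.swap_swap, preimage_union, preimage_swap_qamRect, preimage_swap_qamRect,
        union_comm] at this

end Rect

/-- The real targets `E'`, `e₁'`, `e₂'` leave the casts to the caller. -/
theorem HasCornerEnergies.image_qamPoint {S : Set (ℤ × ℤ)} {E e₁ e₂ : ℤ} {E' e₁' e₂' : ℝ}
    (h : HasCornerEnergies S E e₁ e₂) (hE : (E : ℝ) = E') (he₁ : (e₁ : ℝ) = e₁')
    (he₂ : (e₂ : ℝ) = e₂') :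
    (∀ z ∈ qamPoint '' S, ‖z‖ ^ 2 ≤ E') ∧ (∃ z ∈ qamPoint '' S, ‖z‖ ^ 2 = E') ∧
      ∀ z ∈ qamPoint '' S, ‖z‖ ^ 2 = E' →
        ∃ w1 ∈ qamPoint '' S, ∃ w2 ∈ qamPoint '' S, w1 ≠ w2 ∧
          ‖z - w1‖ = 2 ∧ ‖z - w2‖ = 2 ∧ ‖w1‖ ^ 2 = e₁' ∧ ‖w2‖ ^ 2 = e₂' ∧
          ∀ w ∈ qamPoint '' S, ‖z - w‖ = 2 → w = w1 ∨ w = w2 := by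
  subst hE he₁ he₂
  simpa only [forall_mem_image, exists_mem_image, norm_qamPoint_sq, norm_qamPoint_sub_eq_two_iff,
    qamPoint_injective.ne_iff, qamPoint_injective.eq_iff, Int.cast_le, Int.cast_inj,
    HasCornerEnergies, HasTwoNeighbours] using h

theorem modQAM_even (N : ℕ) : modQAM (2 * N + 2) = qamPoint '' qamRect (2 ^ N) (2 ^ N) := by
  rw [modQAM, if_neg (by omega), if_pos (by omega), show (2 * N + 2 - 2) / 2 = N by omega]
  ext z
  simp only [qamRect, qamPoint, mem_ofPred_eq, mem_image, mem_prod, mem_Icc, Prod.exists,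
    neg_add_eq_sub, and_assoc, eq_comm (a := z)]

theorem modQAM_odd (N : ℕ) : modQAM (2 * N + 5) =
    qamPoint '' (qamRect (2 ^ (N + 1)) (3 * 2 ^ N) ∪ qamRect (3 * 2 ^ N) (2 ^ (N + 1))) := by
  rw [modQAM, if_neg (by omega), if_neg (by omega), show (2 * N + 5 - 3) / 2 = N + 1 by omega,
    show (2 * N + 5 - 5) / 2 = N by omega, union_comm, image_union]
  ext z
  simp only [qamRect, qamPoint, mem_union, mem_ofPred_eq, mem_image, mem_prod, mem_Icc,
    Prod.exists, neg_add_eq_sub, and_assoc, eq_comm (a := z)]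

def qamThreeIndices : Finset (ℤ × ℤ) :=
  {(1, 2), (1, 1), (2, 0), (1, 0), (0, -1), (0, 0), (-1, 1), (0, 1)}

theorem modQAM_three : modQAM 3 = qamPoint '' qamThreeIndices := by
  rw [modQAM, if_pos rfl]
  simp only [qamThreeIndices, Finset.coe_insert, Finset.coe_singleton, image_insert_eq,
    image_singleton, qamPoint]
  norm_num [sub_eq_add_neg]

theorem qamThreeIndices_corner_neighbour :
    (∀ p ∈ qamThreeIndices, qamEnergy p ≤ 10) ∧ (∃ p ∈ qamThreeIndices, qamEnergy p = 10) ∧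
      ∀ p ∈ qamThreeIndices, qamEnergy p = 10 →
        ∃ q ∈ qamThreeIndices, GridAdj p q ∧ qamEnergy q = 2 ∧
          ∀ q' ∈ qamThreeIndices, GridAdj p q' → q' = q := by
  decide

/-- Largest energies and nearest neighbors of largest-energy corner points in
the modified `2^K`-ary QAM constellations. -/
theorem modQAM_corner_energies :
    -- (1) the case K = 3
    ((∀ z ∈ modQAM 3, ‖z‖ ^ 2 ≤ 10) ∧
     (∃ z ∈ modQAM 3, ‖z‖ ^ 2 = 10) ∧
     (∀ z ∈ modQAM 3, ‖z‖ ^ 2 = 10 →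
        ∃ w ∈ modQAM 3, ‖z - w‖ = 2 ∧ ‖w‖ ^ 2 = 2 ∧
          ∀ w' ∈ modQAM 3, ‖z - w'‖ = 2 → w' = w)) ∧
    -- (2) the case of even K ≥ 2
    (∀ K : ℕ, 2 ≤ K → K % 2 = 0 →
      (∀ z ∈ modQAM K, ‖z‖ ^ 2 ≤ 2 * ((2 : ℝ) ^ (K / 2) - 1) ^ 2) ∧
      (∃ z ∈ modQAM K, ‖z‖ ^ 2 = 2 * ((2 : ℝ) ^ (K / 2) - 1) ^ 2) ∧
      (∀ z ∈ modQAM K, ‖z‖ ^ 2 = 2 * ((2 : ℝ) ^ (K / 2) - 1) ^ 2 →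
        ∃ w1 ∈ modQAM K, ∃ w2 ∈ modQAM K, w1 ≠ w2 ∧
          ‖z - w1‖ = 2 ∧ ‖z - w2‖ = 2 ∧
          ‖w1‖ ^ 2 = ((2 : ℝ) ^ (K / 2) - 1) ^ 2 + ((2 : ℝ) ^ (K / 2) - 3) ^ 2 ∧
          ‖w2‖ ^ 2 = ((2 : ℝ) ^ (K / 2) - 1) ^ 2 + ((2 : ℝ) ^ (K / 2) - 3) ^ 2 ∧
          ∀ w ∈ modQAM K, ‖z - w‖ = 2 → w = w1 ∨ w = w2)) ∧
    -- (3) the case of odd K ≥ 5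
    (∀ K : ℕ, 5 ≤ K → K % 2 = 1 →
      (∀ z ∈ modQAM K, ‖z‖ ^ 2 ≤
          ((2 : ℝ) ^ ((K - 1) / 2) - 1) ^ 2 + (3 * (2 : ℝ) ^ ((K - 3) / 2) - 1) ^ 2) ∧
      (∃ z ∈ modQAM K, ‖z‖ ^ 2 =
          ((2 : ℝ) ^ ((K - 1) / 2) - 1) ^ 2 + (3 * (2 : ℝ) ^ ((K - 3) / 2) - 1) ^ 2) ∧
      (∀ z ∈ modQAM K, ‖z‖ ^ 2 =
          ((2 : ℝ) ^ ((K - 1) / 2) - 1) ^ 2 + (3 * (2 : ℝ) ^ ((K - 3) / 2) - 1) ^ 2 →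
        ∃ w1 ∈ modQAM K, ∃ w2 ∈ modQAM K, w1 ≠ w2 ∧
          ‖z - w1‖ = 2 ∧ ‖z - w2‖ = 2 ∧
          ‖w1‖ ^ 2 =
            ((2 : ℝ) ^ ((K - 1) / 2) - 3) ^ 2 + (3 * (2 : ℝ) ^ ((K - 3) / 2) - 1) ^ 2 ∧
          ‖w2‖ ^ 2 =
            ((2 : ℝ) ^ ((K - 1) / 2) - 1) ^ 2 + (3 * (2 : ℝ) ^ ((K - 3) / 2) - 3) ^ 2 ∧
          ∀ w ∈ modQAM K, ‖z - w‖ = 2 → w = w1 ∨ w = w2)) := by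
  refine ⟨?_, fun K hK hKe => ?_, fun K hK hKo => ?_⟩
  · rw [modQAM_three]
    simp only [forall_mem_image, exists_mem_image, Finset.mem_coe, norm_qamPoint_sq,
      norm_qamPoint_sub_eq_two_iff, qamPoint_injective.eq_iff]
    exact_mod_cast qamThreeIndices_corner_neighbour
  · obtain ⟨N, rfl⟩ : ∃ N, K = 2 * N + 2 := ⟨K / 2 - 1, by omega⟩
    have hA : (1 : ℤ) ≤ 2 ^ N := one_le_pow₀ one_le_two
    rw [modQAM_even, show (2 * N + 2) / 2 = N + 1 by omega]
    exact (qamRect_hasCornerEnergies hA hA).image_qamPoint (by push_cast; ring)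
      (by push_cast; ring) (by push_cast; ring)
  · obtain ⟨N, rfl⟩ : ∃ N, K = 2 * N + 5 := ⟨(K - 5) / 2, by omega⟩
    have hQ : (1 : ℤ) ≤ 2 ^ N := one_le_pow₀ one_le_two
    have hA : (1 : ℤ) ≤ 2 ^ (N + 1) := one_le_pow₀ one_le_two
    rw [modQAM_odd, show (2 * N + 5 - 1) / 2 = N + 2 by omega,
      show (2 * N + 5 - 3) / 2 = N + 1 by omega]
    exact (qamRect_union_hasCornerEnergies hA (by linarith)).image_qamPoint
      (by push_cast; ring) (by push_cast; ring) (by push_cast; ring)
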